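/- Every weight measure with stepped base weights is gapfree: if μ is a weight measure over a finite alphabet Σ with values in a linearly ordered cancellative commutative monoid A, and there exists s ∈ A such that μ(Σ) = { m · s^i : 0 ≤ i ≤ |μ(Σ)| − 1 } where m = min(μ(Σ)), then μ is gapfree. -/

import Mathlib

/-- The weight of a word: the product of the weights of its letters. -/
def weight {α A : Type*} [CommMonoid A] [LinearOrder A] [IsOrderedCancelMonoid A] (μ : α → A) (w : List α) : A :=
  (w.map μ).prod

/-- The factor-weight function: `factorWeight μ w i` is the maximum weight of a
length-`i` factor (contiguous subword) of `w`. -/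
def factorWeight {α A : Type*} [CommMonoid A] [LinearOrder A] [IsOrderedCancelMonoid A] (μ : α → A)
    (w : List α) (i : ℕ) : A :=
  ((List.range (w.length + 1 - i)).map fun j => weight μ ((w.drop j).take i)).foldr max 1

/-- A word is `μ`-prefix normal if its factor-weight function agrees with its
prefix-weight function. -/
def PrefixNormal {α A : Type*} [CommMonoid A] [LinearOrder A] [IsOrderedCancelMonoid A] (μ : α → A)
    (w : List α) : Prop :=
  ∀ i ≤ w.length, factorWeight μ w i = weight μ (w.take i)

/-- A weight measure is gapfree if for every word `w` and every `1 ≤ i ≤ |w|` there is a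
letter `a` with `f_{w,μ}(i) = f_{w,μ}(i-1) * μ a`. -/
def Gapfree {α A : Type*} [CommMonoid A] [LinearOrder A] [IsOrderedCancelMonoid A] (μ : α → A) : Prop :=
  ∀ w : List α, ∀ i, 1 ≤ i → i ≤ w.length →
    ∃ a : α, factorWeight μ w i = factorWeight μ w (i - 1) * μ a

/-- `pnClass μ w` is the set `P_μ(w)` of words that are factor-weight equivalent to `w`
and `μ`-prefix normal. -/
def pnClass {α A : Type*} [CommMonoid A] [LinearOrder A] [IsOrderedCancelMonoid A] (μ : α → A)
    (w : List α) : Set (List α) :=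
  {v | (∀ i, factorWeight μ v i = factorWeight μ w i) ∧ PrefixNormal μ v}

/-!
All letter weights have the form `m * s ^ e a` with `e a < n`, so every word of length `i` weighs
`m ^ i * s ^ K`, and for `1 < s` comparing such weights means comparing exponents. A heaviest
factor of length `i + 1` is a factor of length `i`, hence of weight at most `f(i)`, followed by a
letter `a`; a heaviest factor of length `i` is proper and so extends to the left or right by a
letter `b`. Thus `f(i + 1) = f(i) * m * s ^ j` with `e b ≤ j ≤ e a`, and `m * s ^ j` is the weight
of a letter because the exponents form an initial segment of `ℕ`. If `s ≤ 1`, the minimality of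
`m` forces every letter to weigh `m`, and the same argument runs with `m` in place of `s`.
-/
theorem List.foldr_max_mem_cons {A : Type*} [LinearOrder A] (b : A) (l : List A) :
    l.foldr max b ∈ b :: l := by
  induction l with
  | nil => simp
  | cons x l ih =>
    rw [List.foldr_cons]
    rcases max_choice x (l.foldr max b) with h | h <;> rw [h]
    · simp
    · rcases List.mem_cons.mp ih with h' | h' <;> simp [h']

theorem List.IsInfix.exists_append_singleton_or_cons {α : Type*} {v w : List α} (h : v <:+: w)
    (hlt : v.length < w.length) : ∃ b, v ++ [b] <:+: w ∨ b :: v <:+: w := by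
  obtain ⟨s, t, rfl⟩ := h
  cases t with
  | cons b t => exact ⟨b, Or.inl ⟨s, t, by simp⟩⟩
  | nil =>
    rcases List.eq_nil_or_concat s with rfl | ⟨s, b, rfl⟩
    · simp at hlt
    · exact ⟨b, Or.inr ⟨s, [], by simp⟩⟩

section FactorWeight

variable {α A : Type*} [CommMonoid A] [LinearOrder A] [IsOrderedCancelMonoid A] {μ : α → A}

@[simp]
theorem weight_nil : weight μ [] = 1 := rfl

@[simp]
theorem weight_append (u v : List α) : weight μ (u ++ v) = weight μ u * weight μ v := by
  simp [weight]

@[simp]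
theorem weight_cons (a : α) (u : List α) : weight μ (a :: u) = μ a * weight μ u := by
  simp [weight]

theorem one_le_weight (hμ : ∀ a, 1 ≤ μ a) (u : List α) : 1 ≤ weight μ u :=
  List.one_le_prod_of_one_le (by simp [hμ])

theorem weight_eq_mul_pow {m s : A} {e : α → ℕ} (he : ∀ a, μ a = m * s ^ e a) (u : List α) :
    weight μ u = m ^ u.length * s ^ (u.map e).sum := by
  induction u with
  | nil => simp
  | cons a u ih => simp [ih, he, pow_succ', pow_add, mul_mul_mul_comm]

theorem weight_le_factorWeight {u w : List α} (h : u <:+: w) :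
    weight μ u ≤ factorWeight μ w u.length := by
  obtain ⟨s, t, rfl⟩ := h
  refine List.le_max_of_le' 1 (List.mem_map.mpr ⟨s.length, ?_, ?_⟩) le_rfl
  · simp only [List.mem_range, List.length_append]
    omega
  · simp

theorem exists_infix_factorWeight_eq (hμ : ∀ a, 1 ≤ μ a) {w : List α} {k : ℕ}
    (hk : k ≤ w.length) :
    ∃ u, u <:+: w ∧ u.length = k ∧ factorWeight μ w k = weight μ u := by
  rcases List.mem_cons.mp (List.foldr_max_mem_cons 1
      ((List.range (w.length + 1 - k)).map fun j => weight μ ((w.drop j).take k))) with h | h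
  · refine ⟨w.take k, (List.take_prefix k w).isInfix, by simpa using hk, ?_⟩
    have hle := weight_le_factorWeight (μ := μ) (List.take_prefix k w).isInfix
    rw [List.length_take_of_le hk] at hle
    exact le_antisymm (by rw [factorWeight, h]; exact one_le_weight hμ _) hle
  · obtain ⟨j, hj, hfj⟩ := List.mem_map.mp h
    refine ⟨(w.drop j).take k,
      (List.take_prefix k _).isInfix.trans (List.drop_suffix j w).isInfix, ?_, hfj.symm⟩
    simp only [List.mem_range] at hj
    simp only [List.length_take, List.length_drop]
    omega

theorem exists_mul_le_factorWeight_succ (hμ : ∀ a, 1 ≤ μ a) {w : List α} {k : ℕ}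
    (hk : k < w.length) : ∃ b, factorWeight μ w k * μ b ≤ factorWeight μ w (k + 1) := by
  obtain ⟨v, hv, rfl, hfv⟩ := exists_infix_factorWeight_eq hμ hk.le
  obtain ⟨b, hb | hb⟩ := hv.exists_append_singleton_or_cons hk
  · refine ⟨b, ?_⟩
    simpa [hfv] using weight_le_factorWeight (μ := μ) hb
  · refine ⟨b, ?_⟩
    simpa [hfv, mul_comm] using weight_le_factorWeight (μ := μ) hb

theorem exists_factorWeight_succ_eq_mul (hμ : ∀ a, 1 ≤ μ a) {w : List α} {k : ℕ}
    (hk : k < w.length) : ∃ u a, u.length = k ∧ weight μ u ≤ factorWeight μ w k ∧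
      factorWeight μ w (k + 1) = weight μ u * μ a := by
  obtain ⟨v, hv, hlen, hfv⟩ := exists_infix_factorWeight_eq (k := k + 1) hμ hk
  rcases List.eq_nil_or_concat' v with rfl | ⟨u, a, rfl⟩
  · simp at hlen
  · simp only [List.length_append, List.length_singleton, Nat.add_right_cancel_iff] at hlen
    refine ⟨u, a, hlen, ?_, by simp [hfv]⟩
    simpa [hlen] using
      weight_le_factorWeight (μ := μ) ((List.prefix_append u [a]).isInfix.trans hv)

theorem gapfree_of_eq_mul_pow (hμ : ∀ a, 1 ≤ μ a) {m s : A} (hs : 1 < s)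
    {e : α → ℕ} (he : ∀ a, μ a = m * s ^ e a) (hdown : ∀ a, ∀ k ≤ e a, ∃ c, μ c = m * s ^ k) :
    Gapfree μ := by
  have hmul : ∀ (n K q : ℕ), m ^ n * s ^ K * (m * s ^ q) = m ^ n * m * s ^ (K + q) := by
    intro n K q
    rw [pow_add, mul_mul_mul_comm]
  have hmono : ∀ (c : A) (K L : ℕ), c * s ^ K ≤ c * s ^ L ↔ K ≤ L := by
    intro c K L
    rw [mul_le_mul_iff_left, pow_le_pow_iff_right' hs]
  intro w i hi hiw
  obtain ⟨k, rfl⟩ := Nat.exists_eq_add_of_le' hi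
  rw [Nat.add_sub_cancel]
  obtain ⟨u, a, rfl, hu, hfu⟩ := exists_factorWeight_succ_eq_mul hμ hiw
  obtain ⟨v, -, hv, hfv⟩ := exists_infix_factorWeight_eq hμ (Nat.le_of_succ_le hiw)
  obtain ⟨b, hb⟩ := exists_mul_le_factorWeight_succ hμ hiw
  simp only [hfu, hfv, weight_eq_mul_pow he, hv, he] at hu hb
  rw [hmono] at hu
  rw [hmul, hmul, hmono] at hb
  obtain ⟨c, hc⟩ := hdown a ((u.map e).sum + e a - (v.map e).sum) (by omega)
  refine ⟨c, ?_⟩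
  rw [hfu, hfv, hc, weight_eq_mul_pow he, weight_eq_mul_pow he, he, hv, hmul, hmul]
  congr 2
  omega

theorem exists_eq_mul_pow_of_range_eq [Nonempty α] (hμ : ∀ a, 1 < μ a) {m s : A} {n : ℕ}
    (hm : ∀ a, m ≤ μ a) (hrange : Set.range μ = (fun k => m * s ^ k) '' Set.Iio n) :
    ∃ (t : A) (e : α → ℕ), 1 < t ∧ (∀ a, μ a = m * t ^ e a) ∧
      ∀ a, ∀ k ≤ e a, ∃ c, μ c = m * t ^ k := by
  have hμs : ∀ a, ∃ k < n, m * s ^ k = μ a := fun a => by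
    simpa using hrange.subset (Set.mem_range_self a)
  rcases lt_or_ge 1 s with hs | hs
  · choose e hen he using hμs
    refine ⟨s, e, hs, fun a => (he a).symm, fun a k hk => ?_⟩
    simpa [eq_comm] using hrange.symm.subset (Set.mem_image_of_mem _ (by
      simpa using hk.trans_lt (hen a) : k ∈ Set.Iio n))
  · have hconst : ∀ a, μ a = m := fun a => by
      obtain ⟨k, -, hk⟩ := hμs a
      exact le_antisymm (hk ▸ mul_le_of_le_one_right' (pow_le_one' hs k)) (hm a)
    obtain ⟨a₀⟩ := ‹Nonempty α›
    exact ⟨m, fun _ => 0, hconst a₀ ▸ hμ a₀, by simp [hconst], fun a _ _ => ⟨a, by simp_all⟩⟩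

end FactorWeight

/-- Every weight measure with stepped base weights is gapfree: if
`μ(Σ) = { m * s^i : 0 ≤ i ≤ |μ(Σ)| - 1 }` where `m = min μ(Σ)`, then `μ` is gapfree. -/
theorem stepped_baseWeights_gapfree {α A : Type*} [Fintype α] [Nonempty α] [DecidableEq A]
    [CommMonoid A] [LinearOrder A] [IsOrderedCancelMonoid A] (μ : α → A) (hμ : ∀ a : α, 1 < μ a)
    (hstep : ∃ s : A, Finset.univ.image μ =
      (Finset.range (Finset.univ.image μ).card).image
        (fun i => (Finset.univ.image μ).min'
          (Finset.image_nonempty.mpr Finset.univ_nonempty) * s ^ i)) :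
    Gapfree μ := by
  obtain ⟨s, hst⟩ := hstep
  obtain ⟨t, e, ht, he, hdown⟩ := exists_eq_mul_pow_of_range_eq hμ
    (fun a => Finset.min'_le _ _ (Finset.mem_image_of_mem μ (Finset.mem_univ a)))
    (by simpa using congrArg (fun S : Finset A => (S : Set A)) hst)
  exact gapfree_of_eq_mul_pow (fun a => (hμ a).le) ht he hdown
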